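/- Surjectivity of the evaluation map: under the hypotheses above, for every v ∈ V there exists a continuous solution f : [x₀,d] → V of f(x) = v − ∫_{x₀}^x A(t)(f(t)) dt; hence the evaluation map Sol → V, f ↦ f(x₀), is surjective, and therefore a linear bijection from the solution space onto V. -/

import Mathlib

open Set intervalIntegral MeasureTheory

namespace EvalSurjAux

variable {V : Type*} [NormedAddCommGroup V] [NormedSpace ℝ V] [CompleteSpace V]

lemma contOn_integrand (x₀ d : ℝ) (hx : x₀ ≤ d) (A : ℝ → V →L[ℝ] V)
    (hA : ContinuousOn A (Icc x₀ d)) (f : C(Icc x₀ d, V)) :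
    ContinuousOn (fun t => A t (f (projIcc x₀ d hx t))) (Icc x₀ d) :=
  hA.clm_apply (((map_continuous f).comp continuous_projIcc).continuousOn)

noncomputable def T (x₀ d : ℝ) (hx : x₀ ≤ d) (A : ℝ → V →L[ℝ] V)
    (hA : ContinuousOn A (Icc x₀ d)) (v : V) (f : C(Icc x₀ d, V)) : C(Icc x₀ d, V) where
  toFun := fun x => v - ∫ t in x₀..(x : ℝ), A t (f (projIcc x₀ d hx t))
  continuous_toFun := by
    have hint : IntegrableOn (fun t => A t (f (projIcc x₀ d hx t))) (uIcc x₀ d) := by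
      rw [uIcc_of_le hx]
      exact (contOn_integrand x₀ d hx A hA f).integrableOn_compact isCompact_Icc
    have h := continuousOn_primitive_interval (μ := volume) hint
    refine continuous_const.sub (h.comp_continuous continuous_subtype_val fun x => ?_)
    rw [uIcc_of_le hx]; exact x.2

lemma T_apply (x₀ d : ℝ) (hx : x₀ ≤ d) (A : ℝ → V →L[ℝ] V)
    (hA : ContinuousOn A (Icc x₀ d)) (v : V) (f : C(Icc x₀ d, V)) (x : Icc x₀ d) :
    T x₀ d hx A hA v f x = v - ∫ t in x₀..(x : ℝ), A t (f (projIcc x₀ d hx t)) := rfl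

end EvalSurjAux

/-- surjectivity of the evaluation map: every initial value v ∈ V
is attained by a continuous solution of the homogeneous linear integral
equation. -/
theorem evaluation_surjective {V : Type*} [NormedAddCommGroup V]
    [NormedSpace ℝ V] [CompleteSpace V]
    (x₀ d : ℝ) (hx : x₀ ≤ d)
    (A : ℝ → V →L[ℝ] V) (hA : ContinuousOn A (Icc x₀ d))
    (v : V) :
    ∃ f : ℝ → V, ContinuousOn f (Icc x₀ d) ∧ f x₀ = v ∧
      ∀ x ∈ Icc x₀ d, f x = v - ∫ t in x₀..x, A t (f t) := by
  classical
  set T := EvalSurjAux.T x₀ d hx A hA v with hTdef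
  -- bound on A
  obtain ⟨M₀, hM₀⟩ := isCompact_Icc.exists_bound_of_continuousOn hA
  set M : ℝ := max M₀ 0 with hMdef
  have hM0 : (0:ℝ) ≤ M := le_max_right _ _
  have hM : ∀ t ∈ Icc x₀ d, ‖A t‖ ≤ M := fun t ht => (hM₀ t ht).trans (le_max_left _ _)
  -- key pointwise iteration estimate
  have key : ∀ n : ℕ, ∀ f g : C(Icc x₀ d, V), ∀ x : Icc x₀ d,
      ‖T^[n] f x - T^[n] g x‖ ≤ (M * ((x : ℝ) - x₀)) ^ n / n.factorial * dist f g := by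
    intro n
    induction n with
    | zero =>
      intro f g x
      have := ContinuousMap.dist_apply_le_dist (f := f) (g := g) x
      rw [dist_eq_norm] at this
      simpa using this
    | succ n ih =>
      intro f g x
      set F := T^[n] f with hF
      set G := T^[n] g with hG
      set D := dist f g with hD
      have hD0 : 0 ≤ D := dist_nonneg
      rw [Function.iterate_succ_apply', Function.iterate_succ_apply', ← hF, ← hG,
        hTdef, EvalSurjAux.T_apply, EvalSurjAux.T_apply]
      have hsub : uIcc x₀ (x : ℝ) ⊆ Icc x₀ d := by
        rw [uIcc_of_le x.2.1]
        exact Icc_subset_Icc_right x.2.2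
      have hiF : IntervalIntegrable (fun t => A t (F (projIcc x₀ d hx t))) volume x₀ x :=
        ((EvalSurjAux.contOn_integrand x₀ d hx A hA F).mono hsub).intervalIntegrable
      have hiG : IntervalIntegrable (fun t => A t (G (projIcc x₀ d hx t))) volume x₀ x :=
        ((EvalSurjAux.contOn_integrand x₀ d hx A hA G).mono hsub).intervalIntegrable
      have e1 : (v - ∫ t in x₀..(x:ℝ), A t (F (projIcc x₀ d hx t))) -
          (v - ∫ t in x₀..(x:ℝ), A t (G (projIcc x₀ d hx t))) =
          -(∫ t in x₀..(x:ℝ), (A t (F (projIcc x₀ d hx t)) - A t (G (projIcc x₀ d hx t)))) := by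
        rw [intervalIntegral.integral_sub hiF hiG]; abel
      rw [e1, norm_neg]
      -- bound function
      set φ : ℝ → ℝ := fun t => M ^ (n + 1) * D / n.factorial * (t - x₀) ^ n with hφ
      have hφint : IntervalIntegrable φ volume x₀ x := by
        apply Continuous.intervalIntegrable
        continuity
      have hbound : ∀ᵐ t ∂(volume.restrict (Set.uIoc x₀ (x:ℝ))),
          ‖A t (F (projIcc x₀ d hx t)) - A t (G (projIcc x₀ d hx t))‖ ≤ φ t := by
        refine ae_restrict_of_forall_mem measurableSet_uIoc fun t ht => ?_
        rw [uIoc_of_le x.2.1] at ht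
        have htm : t ∈ Icc x₀ d := ⟨ht.1.le, ht.2.trans x.2.2⟩
        have hproj : projIcc x₀ d hx t = ⟨t, htm⟩ := projIcc_of_mem hx htm
        rw [hproj, ← map_sub]
        calc ‖A t (F ⟨t, htm⟩ - G ⟨t, htm⟩)‖
            ≤ ‖A t‖ * ‖F ⟨t, htm⟩ - G ⟨t, htm⟩‖ := (A t).le_opNorm _
          _ ≤ M * ((M * (t - x₀)) ^ n / n.factorial * D) := by
              apply mul_le_mul (hM t htm) (ih f g ⟨t, htm⟩) (norm_nonneg _) hM0
          _ = φ t := by rw [hφ, mul_pow]; ring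
      calc ‖∫ t in x₀..(x:ℝ), (A t (F (projIcc x₀ d hx t)) - A t (G (projIcc x₀ d hx t)))‖
          ≤ |∫ t in x₀..(x:ℝ), φ t| :=
            intervalIntegral.norm_integral_le_abs_of_norm_le hbound hφint
        _ = (M * ((x:ℝ) - x₀)) ^ (n + 1) / (n + 1).factorial * D := by
            have hI : (∫ t in x₀..(x:ℝ), (t - x₀) ^ n) = ((x:ℝ) - x₀) ^ (n + 1) / (n + 1) := by
              have h2 := intervalIntegral.integral_comp_sub_right
                (a := x₀) (b := (x:ℝ)) (fun s => s ^ n) x₀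
              simp only [sub_self] at h2
              rw [h2, integral_pow]
              simp
            rw [hφ]
            rw [intervalIntegral.integral_const_mul, hI]
            have hge : (0:ℝ) ≤ (x:ℝ) - x₀ := sub_nonneg.2 x.2.1
            rw [abs_of_nonneg (by positivity)]
            rw [mul_pow, Nat.factorial_succ]
            push_cast
            have hnf : (n.factorial : ℝ) ≠ 0 := by positivity
            field_simp
  -- uniform contraction estimate
  have hKx : ∀ n : ℕ, ∀ x : Icc x₀ d,
      (M * ((x:ℝ) - x₀)) ^ n ≤ (M * (d - x₀)) ^ n := fun n x =>
    pow_le_pow_left₀ (mul_nonneg hM0 (sub_nonneg.2 x.2.1))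
      (mul_le_mul_of_nonneg_left (sub_le_sub_right x.2.2 x₀) hM0) n
  have hdist : ∀ n : ℕ, ∀ f g : C(Icc x₀ d, V),
      dist (T^[n] f) (T^[n] g) ≤ (M * (d - x₀)) ^ n / n.factorial * dist f g := by
    intro n f g
    have hc0 : (0:ℝ) ≤ (M * (d - x₀)) ^ n / n.factorial :=
      div_nonneg (pow_nonneg (mul_nonneg hM0 (sub_nonneg.2 hx)) n) (by positivity)
    refine (ContinuousMap.dist_le (mul_nonneg hc0 dist_nonneg)).2 fun x => ?_
    rw [dist_eq_norm]
    refine (key n f g x).trans ?_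
    have h1 : (M * ((x:ℝ) - x₀)) ^ n / n.factorial ≤ (M * (d - x₀)) ^ n / n.factorial :=
      (div_le_div_iff_of_pos_right (by exact_mod_cast n.factorial_pos)).2 (hKx n x)
    exact mul_le_mul_of_nonneg_right h1 dist_nonneg
  -- pick n making the constant < 1
  obtain ⟨n, hn⟩ : ∃ n : ℕ, (M * (d - x₀)) ^ n / n.factorial < 1 := by
    have h := FloorSemiring.tendsto_pow_div_factorial_atTop (M * (d - x₀))
    exact (h.eventually (gt_mem_nhds one_pos)).exists
  set c : ℝ := (M * (d - x₀)) ^ n / n.factorial with hc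
  have hc0 : (0:ℝ) ≤ c := div_nonneg (pow_nonneg (mul_nonneg hM0 (sub_nonneg.2 hx)) n)
    (by positivity)
  haveI : Nonempty C(Icc x₀ d, V) := ⟨ContinuousMap.const _ v⟩
  have hlip : LipschitzWith c.toNNReal (T^[n]) := by
    refine LipschitzWith.of_dist_le_mul fun f g => ?_
    rw [Real.coe_toNNReal _ hc0]
    exact hdist n f g
  have hcontr : ContractingWith c.toNNReal (T^[n]) := by
    refine ⟨?_, hlip⟩
    rw [← NNReal.coe_lt_coe, Real.coe_toNNReal _ hc0, NNReal.coe_one]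
    exact hn
  set h : C(Icc x₀ d, V) := hcontr.fixedPoint (T^[n]) with hh
  have hfix : Function.IsFixedPt (T^[n]) h := hcontr.fixedPoint_isFixedPt
  have hfixTh : Function.IsFixedPt (T^[n]) (T h) := by
    show T^[n] (T h) = T h
    rw [← Function.iterate_succ_apply, Function.iterate_succ_apply', hfix]
  have hfixT : T h = h := hcontr.fixedPoint_unique' hfixTh hfix
  refine ⟨fun t => h (projIcc x₀ d hx t),
    ((map_continuous h).comp continuous_projIcc).continuousOn, ?_, ?_⟩
  · show h (projIcc x₀ d hx x₀) = v
    have h0 : h (projIcc x₀ d hx x₀) = T h ⟨x₀, ⟨le_refl _, hx⟩⟩ := by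
      rw [hfixT]
      congr 1
      exact projIcc_of_mem hx ⟨le_refl _, hx⟩
    rw [h0, hTdef, EvalSurjAux.T_apply]
    simp
  · intro x hxm
    show h (projIcc x₀ d hx x) = v - ∫ t in x₀..x, A t (h (projIcc x₀ d hx t))
    have h0 : h (projIcc x₀ d hx x) = T h ⟨x, hxm⟩ := by
      rw [hfixT]
      congr 1
      exact projIcc_of_mem hx hxm
    rw [h0, hTdef, EvalSurjAux.T_apply]
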